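/- Let α be a finite type and f : Finset α → ℝ be normalized, monotone, and submodular. Let S ⊆ α be a finite set, let S* ⊆ α be nonempty, and suppose e is an element not in S maximizing the marginal gain f(S ∪ {e}) − f(S) over all elements not in S. Then f(S*) − f(S) ≤ |S*| · (f(S ∪ {e}) − f(S)). -/
import Mathlib


/-- A set function is submodular. -/
def Submodular {α : Type*} [DecidableEq α] (f : Finset α → ℝ) : Prop :=
  ∀ A B : Finset α, f (A ∪ B) + f (A ∩ B) ≤ f A + f B

/-- A set function is monotone with respect to inclusion. -/
def MonotoneSetFun {α : Type*} (f : Finset α → ℝ) : Prop :=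
  ∀ A B : Finset α, A ⊆ B → f A ≤ f B

/-- Per-step greedy inequality: a greedy step closes at least a `1/|S*|` fraction of the
gap to the value of any nonempty set `S*`. -/
theorem greedy_step_gap_bound
    {α : Type*} [Fintype α] [DecidableEq α] (f : Finset α → ℝ)
    (hnorm : f ∅ = 0)
    (hmono : MonotoneSetFun f)
    (hsub : Submodular f)
    (S Sstar : Finset α) (hne : Sstar.Nonempty)
    (e : α) (he : e ∉ S)
    (hmax : ∀ e' : α, e' ∉ S →
      f (insert e' S) - f S ≤ f (insert e S) - f S) :
    f Sstar - f S ≤ (Sstar.card : ℝ) * (f (insert e S) - f S) := by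
  set g := f (insert e S) - f S with hg
  have hg0 : 0 ≤ g := by
    have := hmono S (insert e S) (Finset.subset_insert e S)
    linarith
  have key : ∀ T : Finset α, f (S ∪ T) - f S ≤ (T.card : ℝ) * g := by
    intro T
    induction T using Finset.induction_on with
    | empty => simp
    | @insert a T' ha ih =>
      rw [Finset.card_insert_of_notMem ha]
      push_cast
      by_cases haS : a ∈ S
      · have : S ∪ insert a T' = S ∪ T' := by
          ext x; simp only [Finset.mem_union, Finset.mem_insert]
          constructor
          · rintro (h | rfl | h) <;> tauto
          · tauto
        rw [this]; nlinarith
      · have hsubm := hsub (S ∪ T') (insert a S)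
        have hU : (S ∪ T') ∪ insert a S = S ∪ insert a T' := by
          ext x; simp only [Finset.mem_union, Finset.mem_insert]; tauto
        have hI : S ⊆ (S ∪ T') ∩ insert a S := by
          intro x hx
          simp only [Finset.mem_inter, Finset.mem_union, Finset.mem_insert]
          tauto
        have hI' := hmono S _ hI
        have hm := hmax a haS
        rw [hU] at hsubm
        nlinarith
  have h1 : f Sstar ≤ f (S ∪ Sstar) := hmono _ _ Finset.subset_union_right
  have h2 := key Sstar
  linarith
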